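/- Let X ⊆ ℝ⁴ be a symplectic polytope. Then for every y ∈ frontier X, the Reeb cone R_y⁺X = {w ∈ ℝ⁴ : w ∈ T_y⁺X and −i·w ∈ N_y⁺X} is one-dimensional: it contains a nonzero vector, and any two of its elements are linearly dependent. (Proposition 1.3 of the paper: the combinatorial Reeb flow on the boundary of a four-dimensional symplectic polytope is well posed.) -/

import Mathlib

open RealInnerProductSpace

/-- The standard complex structure on ℝ⁴:
`i(x₁,x₂,y₁,y₂) = (−y₁,−y₂,x₁,x₂)`. -/
def Imap (v : EuclideanSpace ℝ (Fin 4)) : EuclideanSpace ℝ (Fin 4) :=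
  WithLp.toLp 2 ![-(v 2), -(v 3), v 0, v 1]

/-- The standard symplectic form on ℝ⁴: `ω₀(u,v) = ⟪i·u, v⟫`. -/
noncomputable def omega0 (u v : EuclideanSpace ℝ (Fin 4)) : ℝ := ⟪Imap u, v⟫

/-- The tangent cone `T_y⁺X`. -/
def tangentConePlus {m : ℕ} (X : Set (EuclideanSpace ℝ (Fin m)))
    (y : EuclideanSpace ℝ (Fin m)) : Set (EuclideanSpace ℝ (Fin m)) :=
  closure {v | ∃ ε : ℝ, 0 < ε ∧ y + ε • v ∈ X}

/-- The positive normal cone `N_y⁺X`. -/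
def normalConePlus {m : ℕ} (X : Set (EuclideanSpace ℝ (Fin m)))
    (y : EuclideanSpace ℝ (Fin m)) : Set (EuclideanSpace ℝ (Fin m)) :=
  {v | ∀ x ∈ X, ⟪x - y, v⟫ ≤ 0}

/-- The Reeb cone `R_y⁺X = T_y⁺X ∩ i·N_y⁺X`. -/
def reebConePlus (X : Set (EuclideanSpace ℝ (Fin 4)))
    (y : EuclideanSpace ℝ (Fin 4)) : Set (EuclideanSpace ℝ (Fin 4)) :=
  {w | w ∈ tangentConePlus X y ∧ -(Imap w) ∈ normalConePlus X y}

/-!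
At a boundary point `y` of the polytope the normal cone is generated by the normals `nᵢ` of the
active facets, and the tangent cone is its polar. A nonzero Reeb vector is `i m` for
`m = ∑ tᵢ nᵢ` with weights `t ≥ 0` such that `⟪i m, nⱼ⟫ ≤ 0` for every active `j`. Since
`(j, i) ↦ ω₀(nᵢ, nⱼ)` is skew-symmetric, such weights exist by the minimax theorem for
skew-symmetric games, and `m ≠ 0` because `⟪y, m⟫ = ∑ tᵢ cᵢ > 0`.

If two Reeb vectors `w₁, w₂` were independent, polarity gives `ω₀(w₁, w₂) = 0`. At the point
`y' = y + ε (w₁ + w₂)` of the face they span, `w₁, w₂` lie in the face directions `L = Kᗮ` (with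
`K` spanned by the normals active at `y'`), while `i w₁, i w₂` are normal at `y'` and so lie in
`K`. Counting dimensions in `ℝ⁴` forces `L = span {w₁, w₂}` and `i L ⊆ Lᗮ`: a Lagrangian 2-face.
-/

open Filter Topology

open Matrix in
theorem Matrix.dotProduct_mulVec_self_eq_zero {ι : Type*} [Fintype ι] {M : Matrix ι ι ℝ}
    (hM : Mᵀ = -M) (x : ι → ℝ) : x ⬝ᵥ (M *ᵥ x) = 0 := by
  have h : x ⬝ᵥ (M *ᵥ x) = -(x ⬝ᵥ (M *ᵥ x)) := by
    conv_lhs => rw [dotProduct_mulVec, ← mulVec_transpose, hM, neg_mulVec, dotProduct_comm,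
      dotProduct_neg]
  linarith

open Matrix in
theorem Matrix.exists_nonneg_dotProduct_mulVec_pos {κ ι : Type*} [Fintype κ] [Fintype ι]
    {M : Matrix κ ι ℝ} (h : ∀ t ∈ stdSimplex ℝ ι, ¬M *ᵥ t ≤ 0) :
    ∃ q ≥ 0, ∀ t ∈ stdSimplex ℝ ι, 0 < q ⬝ᵥ (M *ᵥ t) := by
  classical
  have hdisj : Disjoint (M.mulVecLin '' stdSimplex ℝ ι) (Set.Iic 0) := by
    rw [Set.disjoint_left]
    rintro _ ⟨t, ht, rfl⟩ hle
    exact h t ht hle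
  obtain ⟨f, u, v, hfS, huv, hfT⟩ := geometric_hahn_banach_compact_closed
    ((convex_stdSimplex ℝ ι).linear_image _)
    ((isCompact_stdSimplex ℝ ι).image M.mulVecLin.continuous_of_finiteDimensional)
    (convex_Iic 0) isClosed_Iic hdisj
  have hv : v < 0 := by simpa using hfT 0 (Set.mem_Iic.2 le_rfl)
  -- `f > v` on the cone `Iic 0`, hence `f ≥ 0` there
  have hf_nonneg : ∀ x ≤ 0, 0 ≤ f x := by
    intro x hx
    by_contra! hfx
    have := hfT ((v / f x) • x)
      (smul_nonpos_of_nonneg_of_nonpos (div_nonneg_of_nonpos hv.le hfx.le) hx)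
    rw [map_smul, smul_eq_mul, div_mul_cancel₀ _ hfx.ne] at this
    exact this.false
  set q : κ → ℝ := fun j => -f (Pi.single j 1)
  have hf : ∀ x, f x = -(q ⬝ᵥ x) := fun x => by
    rw [← ContinuousLinearMap.coe_coe, LinearMap.pi_apply_eq_sum_univ]
    simp only [q, dotProduct, smul_eq_mul, mul_neg, Finset.sum_neg_distrib, neg_neg, mul_comm]
    congr! with i k
    simp [Pi.single_apply, eq_comm]
  refine ⟨q, fun j => ?_, fun t ht => ?_⟩
  · simpa [q] using hf_nonneg (-Pi.single j 1) (by simp [Pi.single_nonneg])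
  · have := hfS _ ⟨t, ht, rfl⟩
    rw [hf, mulVecLin_apply] at this
    linarith

open Matrix in
theorem Matrix.exists_mem_stdSimplex_mulVec_nonpos {ι : Type*} [Fintype ι] [Nonempty ι]
    {M : Matrix ι ι ℝ} (hM : Mᵀ = -M) : ∃ t ∈ stdSimplex ℝ ι, M *ᵥ t ≤ 0 := by
  classical
  by_contra! h
  obtain ⟨q, hq, hpos⟩ := exists_nonneg_dotProduct_mulVec_pos h
  have hσ : 0 < ∑ j, q j := by
    refine (Finset.sum_nonneg fun j _ => hq j).lt_of_ne fun hσ => ?_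
    have hq0 : q = 0 := funext fun j =>
      (Finset.sum_eq_zero_iff_of_nonneg fun j _ => hq j).1 hσ.symm j (Finset.mem_univ j)
    obtain ⟨i⟩ := ‹Nonempty ι›
    simpa [hq0] using hpos _ (single_mem_stdSimplex ℝ i)
  -- the normalized separating vector is itself a mixed strategy, against which `M` pays `0`
  have ht : (∑ j, q j)⁻¹ • q ∈ stdSimplex ℝ ι :=
    ⟨fun j => by simpa using mul_nonneg (inv_nonneg.2 hσ.le) (hq j),
      by simp [← Finset.mul_sum, hσ.ne']⟩
  simpa [mulVec_smul, dotProduct_mulVec_self_eq_zero hM] using hpos _ ht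

def polyhedron {E ι : Type*} [Inner ℝ E] (n : ι → E) (c : ι → ℝ) : Set E :=
  ⋂ i, {x | ⟪x, n i⟫ ≤ c i}

def normalSpan {E ι : Type*} [NormedAddCommGroup E] [InnerProductSpace ℝ E]
    (n : ι → E) (c : ι → ℝ) (y : E) : Submodule ℝ E :=
  Submodule.span ℝ (n '' {i | ⟪y, n i⟫ = c i})

section Polyhedron

variable {E ι : Type*} [NormedAddCommGroup E] [InnerProductSpace ℝ E] {n : ι → E} {c : ι → ℝ}
  {x y v : E}

theorem tendsto_add_smul_nhdsGT (x v : E) :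
    Tendsto (fun ε : ℝ => x + ε • v) (𝓝[>] 0) (𝓝 x) := by
  have : Continuous fun ε : ℝ => x + ε • v := by fun_prop
  simpa using (this.tendsto 0).mono_left nhdsWithin_le_nhds

theorem mem_polyhedron : x ∈ polyhedron n c ↔ ∀ i, ⟪x, n i⟫ ≤ c i := Set.mem_iInter

theorem isClosed_polyhedron : IsClosed (polyhedron n c) :=
  isClosed_iInter fun _ => isClosed_le (by fun_prop) continuous_const

theorem mem_orthogonal_normalSpan :
    v ∈ (normalSpan n c y)ᗮ ↔ ∀ i, ⟪y, n i⟫ = c i → ⟪n i, v⟫ = 0 := by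
  rw [normalSpan, ← Submodule.span_singleton_le_iff_mem, ← Submodule.isOrtho_iff_le,
    Submodule.isOrtho_comm, Submodule.isOrtho_span]
  simp

theorem inner_lt_of_mem_interior_polyhedron (hx : x ∈ interior (polyhedron n c)) {i : ι}
    (hi : n i ≠ 0) : ⟪x, n i⟫ < c i := by
  obtain ⟨ε, hεP, hε⟩ := (((tendsto_add_smul_nhdsGT x (n i)).eventually
    (mem_interior_iff_mem_nhds.1 hx)).and self_mem_nhdsWithin).exists
  have := mem_polyhedron.1 hεP i
  rw [inner_add_left, real_inner_smul_left, real_inner_self_eq_norm_sq] at this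
  have : 0 < ε * ‖n i‖ ^ 2 := by have := norm_pos_iff.2 hi; positivity
  linarith

variable [Finite ι]

theorem eventually_inner_lt (y : E) :
    ∀ᶠ z in 𝓝 y, ∀ i, ⟪y, n i⟫ < c i → ⟪z, n i⟫ < c i := by
  refine eventually_all.2 fun i => ?_
  by_cases hi : ⟪y, n i⟫ < c i
  · filter_upwards [(continuous_id.inner continuous_const).continuousAt.eventually_lt
      continuousAt_const hi] with z hz _ using hz
  · exact Eventually.of_forall fun _ h => absurd h hi

theorem eventually_inner_add_smul_le_and_eq_iff (hy : y ∈ polyhedron n c)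
    (hv : ∀ i, ⟪y, n i⟫ = c i → ⟪v, n i⟫ ≤ 0) :
    ∀ᶠ ε in 𝓝[>] (0 : ℝ), ∀ i, ⟪y + ε • v, n i⟫ ≤ c i ∧
      (⟪y + ε • v, n i⟫ = c i ↔ ⟪y, n i⟫ = c i ∧ ⟪v, n i⟫ = 0) := by
  filter_upwards [(tendsto_add_smul_nhdsGT y v).eventually
    (eventually_inner_lt (n := n) (c := c) y), self_mem_nhdsWithin] with ε hinact (hε : 0 < ε) i
  rcases (mem_polyhedron.1 hy i).lt_or_eq with hlt | heq
  · have := hinact i hlt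
    exact ⟨this.le, by simp [this.ne, hlt.ne]⟩
  · rw [inner_add_left, real_inner_smul_left, heq]
    have := hv i heq
    constructor
    · nlinarith
    · simp [hε.ne']

theorem mem_frontier_polyhedron (hn : ∀ i, n i ≠ 0) :
    y ∈ frontier (polyhedron n c) ↔ y ∈ polyhedron n c ∧ ∃ i, ⟪y, n i⟫ = c i := by
  rw [isClosed_polyhedron.frontier_eq, Set.mem_sdiff, and_congr_right_iff]
  intro hy
  constructor
  · intro hint
    by_contra! hinact
    refine hint (mem_interior_iff_mem_nhds.2 ?_)
    filter_upwards [eventually_inner_lt (n := n) (c := c) y] with z hz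
    exact mem_polyhedron.2 fun i => (hz i ((mem_polyhedron.1 hy i).lt_of_ne (hinact i))).le
  · rintro ⟨i, hi⟩ hint
    exact (inner_lt_of_mem_interior_polyhedron hint (hn i)).ne hi

end Polyhedron

section Cones

variable {d : ℕ} {X : Set (EuclideanSpace ℝ (Fin d))} {y v z m : EuclideanSpace ℝ (Fin d)}

theorem inner_nonpos_of_mem_tangentConePlus
    (hv : v ∈ tangentConePlus X y) (hm : m ∈ normalConePlus X y) : ⟪v, m⟫ ≤ 0 := by
  refine closure_minimal (t := {v | ⟪v, m⟫ ≤ 0}) ?_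
    (isClosed_le (by fun_prop) continuous_const) hv
  rintro v ⟨ε, hε, hεv⟩
  have := hm _ hεv
  rw [add_sub_cancel_left, real_inner_smul_left] at this
  exact nonpos_of_mul_nonpos_right this hε

theorem inner_eq_zero_of_mem_tangentConePlus_inter_neg
    (hz : z ∈ tangentConePlus X y ∩ -tangentConePlus X y) (hm : m ∈ normalConePlus X y) :
    ⟪z, m⟫ = 0 := by
  have h := inner_nonpos_of_mem_tangentConePlus hz.2 hm
  rw [inner_neg_left] at h
  exact le_antisymm (inner_nonpos_of_mem_tangentConePlus hz.1 hm) (by linarith)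

theorem mem_normalConePlus_add_smul (hm : m ∈ normalConePlus X y) (hv : ⟪v, m⟫ = 0) (ε : ℝ) :
    m ∈ normalConePlus X (y + ε • v) := fun x hx => by
  rw [sub_add_eq_sub_sub, inner_sub_left, real_inner_smul_left, hv, mul_zero, sub_zero]
  exact hm x hx

theorem sum_smul_mem_normalConePlus {κ : Type*} [Fintype κ] {t : κ → ℝ}
    {p : κ → EuclideanSpace ℝ (Fin d)} (ht : 0 ≤ t) (hp : ∀ k, p k ∈ normalConePlus X y) :
    ∑ k, t k • p k ∈ normalConePlus X y := fun x hx => by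
  rw [inner_sum]
  exact Finset.sum_nonpos fun k _ => by
    rw [real_inner_smul_right]
    exact mul_nonpos_of_nonneg_of_nonpos (ht k) (hp k x hx)

variable {ι : Type*} {n : ι → EuclideanSpace ℝ (Fin d)} {c : ι → ℝ}

theorem mem_normalConePlus_polyhedron {i : ι} (hi : ⟪y, n i⟫ = c i) :
    n i ∈ normalConePlus (polyhedron n c) y := fun x hx => by
  rw [inner_sub_left, hi]
  linarith [mem_polyhedron.1 hx i]

variable [Finite ι]

theorem tangentConePlus_polyhedron (hy : y ∈ polyhedron n c) :
    tangentConePlus (polyhedron n c) y = {v | ∀ i, ⟪y, n i⟫ = c i → ⟪v, n i⟫ ≤ 0} := by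
  refine subset_antisymm (closure_minimal ?_ ?_) fun v hv => subset_closure ?_
  · rintro v ⟨ε, hε, hεv⟩ i hi
    have := mem_polyhedron.1 hεv i
    rw [inner_add_left, real_inner_smul_left, hi] at this
    exact nonpos_of_mul_nonpos_right (by linarith) hε
  · simp only [Set.ofPred_forall]
    exact isClosed_iInter fun i => isClosed_iInter fun _ =>
      isClosed_le (by fun_prop) continuous_const
  · obtain ⟨ε, hε, hεpos⟩ :=
      ((eventually_inner_add_smul_le_and_eq_iff hy hv).and self_mem_nhdsWithin).exists
    exact ⟨ε, hεpos, mem_polyhedron.2 fun i => (hε i).1⟩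

theorem tangentConePlus_inter_neg_polyhedron (hy : y ∈ polyhedron n c) :
    tangentConePlus (polyhedron n c) y ∩ -tangentConePlus (polyhedron n c) y =
      (normalSpan n c y)ᗮ := by
  ext z
  simp only [tangentConePlus_polyhedron hy, SetLike.mem_coe, mem_orthogonal_normalSpan,
    Set.mem_inter_iff, Set.mem_neg, Set.mem_ofPred_eq, inner_neg_left, neg_nonpos,
    ← forall_and, real_inner_comm z, le_antisymm_iff]

end Cones

theorem Submodule.orthogonal_eq_of_le_of_map_le {E : Type*} [NormedAddCommGroup E]
    [InnerProductSpace ℝ E] [FiniteDimensional ℝ E] (J : E ≃ₗ[ℝ] E) {K W : Submodule ℝ E}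
    (hWK : W ≤ Kᗮ) (hJWK : W.map (J : E →ₗ[ℝ] E) ≤ K)
    (hW : Module.finrank ℝ E = 2 * Module.finrank ℝ W) : Kᗮ = W := by
  have h₁ := Submodule.finrank_mono hWK
  have h₂ := J.finrank_map_eq W ▸ Submodule.finrank_mono hJWK
  have h₃ := K.finrank_add_finrank_orthogonal
  exact (Submodule.eq_of_le_of_finrank_le hWK (by omega)).symm

local notation "ℝ⁴" => EuclideanSpace ℝ (Fin 4)

theorem Imap_Imap (v : ℝ⁴) : Imap (Imap v) = -v := by
  ext i
  fin_cases i <;> simp [Imap]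

theorem Imap_neg (v : ℝ⁴) : Imap (-v) = -Imap v := by
  ext i
  fin_cases i <;> simp [Imap]

theorem inner_Imap_self (v : ℝ⁴) : ⟪Imap v, v⟫ = 0 := by
  simp [PiLp.inner_apply, Imap, Fin.sum_univ_four]
  ring

theorem omega0_comm (u v : ℝ⁴) : omega0 u v = -omega0 v u := by
  simp [omega0, PiLp.inner_apply, Imap, Fin.sum_univ_four]
  ring

def Imapₗ : ℝ⁴ ≃ₗ[ℝ] ℝ⁴ where
  toFun := Imap
  invFun v := -Imap v
  map_add' u v := by
    ext i
    fin_cases i <;> simp [Imap] <;> ring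
  map_smul' a v := by
    ext i
    fin_cases i <;> simp [Imap]
  left_inv v := by simp [Imap_Imap]
  right_inv v := by simp [Imap_neg, Imap_Imap]

@[simp]
theorem Imapₗ_apply (v : ℝ⁴) : Imapₗ v = Imap v := rfl

@[simp]
theorem Imap_eq_zero {v : ℝ⁴} : Imap v = 0 ↔ v = 0 := Imapₗ.map_eq_zero_iff

theorem omega0_eq_zero_of_mem_reebConePlus {X : Set ℝ⁴} {y w₁ w₂ : ℝ⁴}
    (hw₁ : w₁ ∈ reebConePlus X y) (hw₂ : w₂ ∈ reebConePlus X y) : omega0 w₁ w₂ = 0 := by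
  have h₁₂ := inner_nonpos_of_mem_tangentConePlus hw₂.1 hw₁.2
  have h₂₁ := inner_nonpos_of_mem_tangentConePlus hw₁.1 hw₂.2
  rw [inner_neg_right, real_inner_comm, neg_nonpos] at h₁₂ h₂₁
  rw [← omega0, omega0_comm] at h₂₁
  rw [← omega0] at h₁₂
  linarith

def NoLagrangianTwoFaces (X : Set ℝ⁴) : Prop :=
  ∀ y ∈ frontier X, ∀ L : Submodule ℝ ℝ⁴,
    (L : Set ℝ⁴) = tangentConePlus X y ∩ -(tangentConePlus X y) →
    Module.finrank ℝ L = 2 → ∃ u ∈ L, ∃ v ∈ L, omega0 u v ≠ 0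

section Polytope

variable {ι : Type*} {n : ι → ℝ⁴} {c : ι → ℝ} {y w₁ w₂ : ℝ⁴}

theorem exists_ne_zero_mem_reebConePlus_polyhedron [Fintype ι] (hn : ∀ i, n i ≠ 0)
    (h0 : 0 ∈ interior (polyhedron n c)) (hy : y ∈ polyhedron n c)
    (hact : ∃ i, ⟪y, n i⟫ = c i) : ∃ w ∈ reebConePlus (polyhedron n c) y, w ≠ 0 := by
  classical
  let A := {i // ⟪y, n i⟫ = c i}
  have : Nonempty A := nonempty_subtype.2 hact
  obtain ⟨t, ht, hMt⟩ := Matrix.exists_mem_stdSimplex_mulVec_nonpos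
    (M := Matrix.of fun j i : A => omega0 (n i) (n j)) (Matrix.ext fun _ _ => omega0_comm _ _)
  set m := ∑ i : A, t i • n i
  have hm : m ∈ normalConePlus (polyhedron n c) y :=
    sum_smul_mem_normalConePlus ht.1 fun i => mem_normalConePlus_polyhedron i.2
  refine ⟨Imap m, ⟨?_, by rwa [Imap_Imap, neg_neg]⟩, ?_⟩
  · rw [tangentConePlus_polyhedron hy]
    intro j hj
    change ⟪Imapₗ m, n j⟫ ≤ 0
    simpa [m, sum_inner, real_inner_smul_left, Matrix.mulVec, dotProduct, omega0, mul_comm]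
      using hMt ⟨j, hj⟩
  · obtain ⟨j, -, hj⟩ := Finset.exists_lt_of_sum_lt (s := Finset.univ) (f := 0) (g := t)
      (by simp [ht.2])
    have hc : ∀ i, 0 < c i := fun i => by
      simpa using inner_lt_of_mem_interior_polyhedron h0 (hn i)
    have hym : 0 < ⟪y, m⟫ := by
      simp only [m, inner_sum, real_inner_smul_right]
      refine Finset.sum_pos' (fun i _ => ?_) ⟨j, Finset.mem_univ _, ?_⟩
      · rw [i.2]
        exact mul_nonneg (ht.1 i) (hc i).le
      · rw [j.2]
        exact mul_pos hj (hc j)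
    rw [Ne, Imap_eq_zero]
    rintro hm0
    simp [hm0] at hym

variable [Finite ι]

theorem exists_mem_orthogonal_normalSpan_of_mem_reebConePlus (hy : y ∈ polyhedron n c)
    (hw₁ : w₁ ∈ reebConePlus (polyhedron n c) y) (hw₂ : w₂ ∈ reebConePlus (polyhedron n c) y) :
    ∃ y' ∈ polyhedron n c, ∀ w ∈ ({w₁, w₂} : Set ℝ⁴),
      w ∈ (normalSpan n c y')ᗮ ∧ Imap w ∈ normalSpan n c y' := by
  have h₁ := hw₁.1
  have h₂ := hw₂.1
  rw [tangentConePlus_polyhedron hy] at h₁ h₂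
  obtain ⟨ε, hε, -⟩ := ((eventually_inner_add_smul_le_and_eq_iff hy (v := w₁ + w₂)
    fun i hi => by rw [inner_add_left]; linarith [h₁ i hi, h₂ i hi]).and
      self_mem_nhdsWithin).exists
  have hy' : y + ε • (w₁ + w₂) ∈ polyhedron n c := mem_polyhedron.2 fun i => (hε i).1
  refine ⟨_, hy', fun w hw => ⟨?_, ?_⟩⟩
  · rw [mem_orthogonal_normalSpan]
    intro i hi
    obtain ⟨hiy, hiw⟩ := (hε i).2.1 hi
    rw [inner_add_left] at hiw
    rcases hw with rfl | rfl <;> rw [real_inner_comm] <;> linarith [h₁ i hiy, h₂ i hiy]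
  · have hω : ⟪Imap w, w₁⟫ = 0 ∧ ⟪Imap w, w₂⟫ = 0 := by
      rcases hw with rfl | rfl
      exacts [⟨inner_Imap_self w, omega0_eq_zero_of_mem_reebConePlus hw₁ hw₂⟩,
        ⟨omega0_eq_zero_of_mem_reebConePlus hw₂ hw₁, inner_Imap_self w⟩]
    have hwR : w ∈ reebConePlus (polyhedron n c) y := by rcases hw with rfl | rfl <;> assumption
    -- `-Imap w` stays a normal vector at `y'`, hence is orthogonal to the lineality space there
    have hN := mem_normalConePlus_add_smul hwR.2 (v := w₁ + w₂) (by
      rw [inner_neg_right, inner_add_left, real_inner_comm (Imap w), real_inner_comm (Imap w),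
        hω.1, hω.2, add_zero, neg_zero]) ε
    have : -Imap w ∈ (normalSpan n c (y + ε • (w₁ + w₂)))ᗮᗮ := fun z hz =>
      inner_eq_zero_of_mem_tangentConePlus_inter_neg
        (by rwa [tangentConePlus_inter_neg_polyhedron hy']) hN
    rw [Submodule.orthogonal_orthogonal] at this
    simpa using neg_mem this

theorem not_linearIndependent_of_mem_reebConePlus (hn : ∀ i, n i ≠ 0)
    (hsymp : NoLagrangianTwoFaces (polyhedron n c)) (hy : y ∈ polyhedron n c)
    (hw₁ : w₁ ∈ reebConePlus (polyhedron n c) y) (hw₂ : w₂ ∈ reebConePlus (polyhedron n c) y) :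
    ¬LinearIndependent ℝ ![w₁, w₂] := by
  intro hli
  obtain ⟨y', hy', hw⟩ := exists_mem_orthogonal_normalSpan_of_mem_reebConePlus hy hw₁ hw₂
  set K := normalSpan n c y'
  set W := Submodule.span ℝ (Set.range ![w₁, w₂])
  have hrange : Set.range ![w₁, w₂] = {w₁, w₂} := by simp [Set.pair_comm]
  have hW : Module.finrank ℝ W = 2 := by simp [W, finrank_span_eq_card hli]
  have hJWK : W.map (Imapₗ : ℝ⁴ →ₗ[ℝ] ℝ⁴) ≤ K :=
    (Submodule.map_span_le _ _ _).2 fun w hw' => (hw w (hrange ▸ hw')).2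
  have hKW : Kᗮ = W := Submodule.orthogonal_eq_of_le_of_map_le Imapₗ
    (Submodule.span_le.2 fun w hw' => (hw w (hrange ▸ hw')).1) hJWK
    (by rw [hW, finrank_euclideanSpace_fin])
  have hact : ∃ i, ⟪y', n i⟫ = c i := by
    by_contra! hinact
    have hK : K = ⊥ := by simp [K, normalSpan, hinact]
    exact hli.ne_zero 0 (by simpa [hK] using (hw w₁ (by simp)).2)
  obtain ⟨u, hu, u', hu', hω⟩ := hsymp y' ((mem_frontier_polyhedron hn).2 ⟨hy', hact⟩) Kᗮ
    (tangentConePlus_inter_neg_polyhedron hy').symm (hKW ▸ hW)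
  exact hω (Submodule.inner_right_of_mem_orthogonal
    (hJWK (Submodule.mem_map_of_mem (hKW ▸ hu))) hu')

end Polytope

theorem reebCone_one_dimensional_general {N : ℕ}
    (n : Fin N → EuclideanSpace ℝ (Fin 4)) (c : Fin N → ℝ)
    (hn : ∀ i, n i ≠ 0)
    (X : Set (EuclideanSpace ℝ (Fin 4)))
    (hX : X = ⋂ i, {x | ⟪x, n i⟫ ≤ c i})
    (h0 : (0 : EuclideanSpace ℝ (Fin 4)) ∈ interior X)
    (hsymp : ∀ y ∈ frontier X, ∀ L : Submodule ℝ (EuclideanSpace ℝ (Fin 4)),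
      (L : Set (EuclideanSpace ℝ (Fin 4))) =
        tangentConePlus X y ∩ -(tangentConePlus X y) →
      Module.finrank ℝ L = 2 →
      ∃ u ∈ L, ∃ v ∈ L, omega0 u v ≠ 0) :
    ∀ y ∈ frontier X,
      (∃ w ∈ reebConePlus X y, w ≠ 0) ∧
      (∀ w₁ ∈ reebConePlus X y, ∀ w₂ ∈ reebConePlus X y,
        ∃ a b : ℝ, (a ≠ 0 ∨ b ≠ 0) ∧ a • w₁ + b • w₂ = 0) := by
  change X = polyhedron n c at hX
  subst hX
  intro y hy
  obtain ⟨hyP, hact⟩ := (mem_frontier_polyhedron hn).1 hy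
  refine ⟨exists_ne_zero_mem_reebConePlus_polyhedron hn h0 hyP hact, fun w₁ hw₁ w₂ hw₂ => ?_⟩
  have hdep := not_linearIndependent_of_mem_reebConePlus hn hsymp hyP hw₁ hw₂
  simp only [LinearIndependent.pair_iff, not_forall, not_and_or, exists_prop] at hdep
  obtain ⟨a, b, hab, hne⟩ := hdep
  exact ⟨a, b, hne, hab⟩

/-- Proposition 1.3: for a symplectic polytope `X ⊆ ℝ⁴` (a convex polytope with `0` in
its interior, none of whose 2-faces is Lagrangian), the Reeb cone at every boundary
point is one-dimensional: it contains a nonzero vector, and any two of its elements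
are linearly dependent. -/
theorem reebCone_one_dimensional {N : ℕ}
    (n : Fin N → EuclideanSpace ℝ (Fin 4)) (c : Fin N → ℝ)
    (hn : ∀ i, n i ≠ 0)
    (X : Set (EuclideanSpace ℝ (Fin 4)))
    (hX : X = ⋂ i, {x | ⟪x, n i⟫ ≤ c i})
    (hcomp : IsCompact X)
    (h0 : (0 : EuclideanSpace ℝ (Fin 4)) ∈ interior X)
    (hsymp : ∀ y ∈ frontier X, ∀ L : Submodule ℝ (EuclideanSpace ℝ (Fin 4)),
      (L : Set (EuclideanSpace ℝ (Fin 4))) =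
        tangentConePlus X y ∩ -(tangentConePlus X y) →
      Module.finrank ℝ L = 2 →
      ∃ u ∈ L, ∃ v ∈ L, omega0 u v ≠ 0) :
    ∀ y ∈ frontier X,
      (∃ w ∈ reebConePlus X y, w ≠ 0) ∧
      (∀ w₁ ∈ reebConePlus X y, ∀ w₂ ∈ reebConePlus X y,
        ∃ a b : ℝ, (a ≠ 0 ∨ b ≠ 0) ∧ a • w₁ + b • w₂ = 0) :=
  reebCone_one_dimensional_general n c hn X hX h0 hsymp
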